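/- arXiv:2605.02846 — 6 statements merged into one kernel-verified Lean document; each statement's English description precedes it below -/
import Mathlib

section
/- If (J, [·,·], α) is a regular Hom-Jacobi-Jordan algebra (i.e., α is an algebra automorphism), then (J, [·,·]_{α⁻¹}), where [x,y]_{α⁻¹} := α⁻¹([x,y]), is a Jacobi-Jordan algebra. -/
/-- If `(J, br, α)` is a regular Hom-Jacobi-Jordan algebra (`α` an algebra
automorphism), then `(J, α⁻¹ ∘ br)` is a Jacobi-Jordan algebra. -/
theorem regular_hjj_gives_jacobi_jordan
    {K : Type*} [Field K] {J : Type*} [AddCommGroup J] [Module K J]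
    (br : J →ₗ[K] J →ₗ[K] J) (α : J ≃ₗ[K] J)
    (hsymm : ∀ x y : J, br x y = br y x)
    (hmult : ∀ x y : J, α (br x y) = br (α x) (α y))
    (hjac : ∀ x y z : J, br (α x) (br y z) + br (α y) (br z x) + br (α z) (br x y) = 0) :
    ∀ x y z : J,
      α.symm (br x (α.symm (br y z))) + α.symm (br y (α.symm (br z x)))
        + α.symm (br z (α.symm (br x y))) = 0 := by
  have hmult' : ∀ x y : J, α.symm (br x y) = br (α.symm x) (α.symm y) := by
    intro x y
    have := hmult (α.symm x) (α.symm y)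
    simp only [α.apply_symm_apply] at this
    rw [← this, α.symm_apply_apply]
  intro x y z
  have h := hjac (α.symm (α.symm x)) (α.symm (α.symm y)) (α.symm (α.symm z))
  simp only [α.apply_symm_apply] at h
  simp only [hmult']
  exact h
end

section
/- Every finite-dimensional Hom-Jacobi-Jordan algebra (M, [·,·], α) over ℂ with α not bijective decomposes as a direct sum of subspaces M = J ⊕ K where J = Im(α^m), K = ker(α^m) with m = dim M, such that K is an ideal of M and the restriction of α to J is a bijection of J onto itself. -/
lemma hjj_pow_mult {M : Type*} [AddCommGroup M] [Module ℂ M]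
    (br : M →ₗ[ℂ] M →ₗ[ℂ] M) (α : M →ₗ[ℂ] M)
    (hmult : ∀ x y : M, α (br x y) = br (α x) (α y)) (n : ℕ) :
    ∀ x y : M, (α ^ n) (br x y) = br ((α ^ n) x) ((α ^ n) y) := by
  induction n with
  | zero => simp
  | succ n ih =>
    intro x y
    simp only [pow_succ, Module.End.mul_apply, ih, hmult]

lemma hjj_range_pow_stab {M : Type*} [AddCommGroup M] [Module ℂ M] [FiniteDimensional ℂ M]
    (α : M →ₗ[ℂ] M) {n : ℕ} (hn : Module.finrank ℂ M ≤ n) :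
    LinearMap.range (α ^ n) = LinearMap.range (α ^ Module.finrank ℂ M) := by
  have hker : LinearMap.ker (α ^ n) = LinearMap.ker (α ^ Module.finrank ℂ M) :=
    Module.End.ker_pow_eq_ker_pow_finrank_of_le hn
  have hle : LinearMap.range (α ^ n) ≤ LinearMap.range (α ^ Module.finrank ℂ M) := by
    rw [show n = Module.finrank ℂ M + (n - Module.finrank ℂ M) by omega, pow_add]
    exact LinearMap.range_comp_le_range _ _
  refine Submodule.eq_of_le_of_finrank_le hle ?_
  have h1 := LinearMap.finrank_range_add_finrank_ker (α ^ n)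
  have h2 := LinearMap.finrank_range_add_finrank_ker (α ^ Module.finrank ℂ M)
  rw [hker] at h1
  omega

/-- A finite-dimensional complex Hom-Jacobi-Jordan algebra whose twist `α`
is not bijective decomposes (Fitting) as `M = Im(α^m) ⊕ ker(α^m)` with `m = dim M`, where
`ker(α^m)` is an ideal and `α` restricts to a bijection of `Im(α^m)` onto itself. -/
theorem nonregular_hjj_fitting_decomposition
    {M : Type*} [AddCommGroup M] [Module ℂ M] [FiniteDimensional ℂ M]
    (br : M →ₗ[ℂ] M →ₗ[ℂ] M) (α : M →ₗ[ℂ] M)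
    (hsymm : ∀ x y : M, br x y = br y x)
    (hmult : ∀ x y : M, α (br x y) = br (α x) (α y))
    (hjac : ∀ x y z : M, br (α x) (br y z) + br (α y) (br z x) + br (α z) (br x y) = 0)
    (hnonreg : ¬ Function.Bijective α) :
    IsCompl (LinearMap.range (α ^ Module.finrank ℂ M))
        (LinearMap.ker (α ^ Module.finrank ℂ M)) ∧
      (∀ a ∈ LinearMap.ker (α ^ Module.finrank ℂ M), ∀ y : M,
        br a y ∈ LinearMap.ker (α ^ Module.finrank ℂ M)) ∧
      (∀ a ∈ LinearMap.ker (α ^ Module.finrank ℂ M),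
        α a ∈ LinearMap.ker (α ^ Module.finrank ℂ M)) ∧
      Set.BijOn α (LinearMap.range (α ^ Module.finrank ℂ M) : Set M)
        (LinearMap.range (α ^ Module.finrank ℂ M) : Set M) := by
  set m := Module.finrank ℂ M with hm
  -- m ≥ 1
  have hm1 : 1 ≤ m := by
    by_contra h
    have : Module.finrank ℂ M = 0 := by omega
    have : Subsingleton M := Module.finrank_zero_iff.mp this
    exact hnonreg ⟨fun a b _ => Subsingleton.elim a b, fun y => ⟨y, Subsingleton.elim _ _⟩⟩
  -- IsCompl
  obtain ⟨n, hn⟩ := Filter.eventually_atTop.mp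
    (α.eventually_isCompl_ker_pow_range_pow)
  have hcompl : IsCompl (LinearMap.ker (α ^ m)) (LinearMap.range (α ^ m)) := by
    have h := hn (max n m) (le_max_left _ _)
    rwa [Module.End.ker_pow_eq_ker_pow_finrank_of_le (le_max_right _ _),
      hjj_range_pow_stab α (le_max_right _ _)] at h
  refine ⟨hcompl.symm, ?_, ?_, ?_⟩
  · intro a ha y
    rw [LinearMap.mem_ker, hjj_pow_mult br α hmult, LinearMap.mem_ker.mp ha]
    simp
  · intro a ha
    have h1 : a ∈ LinearMap.ker (α ^ (m + 1)) := by
      rw [hm, Module.End.ker_pow_eq_ker_pow_finrank_of_le (by omega)]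
      exact ha
    rw [LinearMap.mem_ker, ← Module.End.mul_apply, ← pow_succ]
    exact LinearMap.mem_ker.mp h1
  · have hrs : LinearMap.range (α ^ (m + 1)) = LinearMap.range (α ^ m) :=
      hjj_range_pow_stab α (by omega)
    refine ⟨?_, ?_, ?_⟩
    · rintro x ⟨y, rfl⟩
      rw [← hrs]
      exact ⟨y, by rw [pow_succ']; rfl⟩
    · intro x hx y hy hxy
      have : x - y ∈ LinearMap.ker α := by
        rw [LinearMap.mem_ker, map_sub, hxy, sub_self]
      have hk : x - y ∈ LinearMap.ker (α ^ m) := by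
        have : LinearMap.ker α ≤ LinearMap.ker (α ^ m) := by
          calc LinearMap.ker α = LinearMap.ker (α ^ 1) := by rw [pow_one]
            _ ≤ _ := Module.End.ker_pow_le_ker_pow_finrank α 1
        exact this ‹_›
      have hr : x - y ∈ LinearMap.range (α ^ m) :=
        Submodule.sub_mem _ hx hy
      have hb := hcompl.disjoint.eq_bot ▸ Submodule.mem_inf.mpr ⟨hk, hr⟩
      exact sub_eq_zero.mp (Submodule.mem_bot (R := ℂ) |>.mp hb)
    · rintro y hy
      rw [← hrs] at hy
      obtain ⟨x, rfl⟩ := hy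
      exact ⟨(α ^ m) x, ⟨x, rfl⟩, by rw [← Module.End.mul_apply, ← pow_succ']⟩
end

section
/- Let (J, [·,·], α) and (V, [·,·]_V, β) be Hom-Jacobi-Jordan algebras, ρ: J → End(V) a linear map and θ: J × J → V a symmetric bilinear map with β∘θ = θ∘(α⊗α). Define on J ⊕ V the symmetric bilinear bracket [x+u, y+v]' = [x,y] + θ(x,y) + ρ(x)v + ρ(y)u + [u,v]_V and the linear map α⊕β. Then (J⊕V, [·,·]', α⊕β) is a Hom-Jacobi-Jordan algebra if and only if (ρ, θ) is a 2-cocycle, i.e.: (i) ρ(α(x))∘β = β∘ρ(x); (ii) ρ([x,y])β(v) = −ρ(α(x))ρ(y)v − ρ(α(y))ρ(x)v − [θ(x,y), β(v)]_V; (iii) θ(α(x),[y,z]) + θ(α(y),[x,z]) + θ(α(z),[x,y]) + ρ(α(x))θ(y,z) + ρ(α(y))θ(x,z) + ρ(α(z))θ(x,y) = 0; (iv) ρ(α(x))[u,v]_V = −[β(u), ρ(x)v]_V − [β(v), ρ(x)u]_V. -/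
variable {K : Type*} [Field K]
variable {J : Type*} [AddCommGroup J] [Module K J]
variable {V : Type*} [AddCommGroup V] [Module K V]

/-- `(ρ, θ)` is a 2-cocycle of the Hom-Jacobi-Jordan algebra `(J, br, α)` with values in the
Hom-Jacobi-Jordan algebra `(V, brV, β)`. -/
def IsTwoCocycle (br : J →ₗ[K] J →ₗ[K] J) (α : J →ₗ[K] J)
    (brV : V →ₗ[K] V →ₗ[K] V) (β : V →ₗ[K] V)
    (ρ : J →ₗ[K] V →ₗ[K] V) (θ : J →ₗ[K] J →ₗ[K] V) : Prop :=
  (∀ x y : J, θ x y = θ y x) ∧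
  (∀ x y : J, β (θ x y) = θ (α x) (α y)) ∧
  (∀ (x : J) (v : V), ρ (α x) (β v) = β (ρ x v)) ∧
  (∀ (x y : J) (v : V),
    ρ (br x y) (β v) = - ρ (α x) (ρ y v) - ρ (α y) (ρ x v) - brV (θ x y) (β v)) ∧
  (∀ x y z : J,
    θ (α x) (br y z) + θ (α y) (br x z) + θ (α z) (br x y)
      + ρ (α x) (θ y z) + ρ (α y) (θ x z) + ρ (α z) (θ x y) = 0) ∧
  (∀ (x : J) (u v : V), ρ (α x) (brV u v) = - brV (β u) (ρ x v) - brV (β v) (ρ x u))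

/-- The bracket `[x+u, y+v]' = [x,y] + θ(x,y) + ρ(x)v + ρ(y)u + [u,v]_V`
together with the twist `α ⊕ β` makes `J ⊕ V` a Hom-Jacobi-Jordan algebra if and only if
`(ρ, θ)` is a 2-cocycle. -/
theorem semidirect_sum_is_hjj_iff_two_cocycle
    (br : J →ₗ[K] J →ₗ[K] J) (α : J →ₗ[K] J)
    (brV : V →ₗ[K] V →ₗ[K] V) (β : V →ₗ[K] V)
    (hsymm : ∀ x y : J, br x y = br y x)
    (hmult : ∀ x y : J, α (br x y) = br (α x) (α y))
    (hjac : ∀ x y z : J, br (α x) (br y z) + br (α y) (br z x) + br (α z) (br x y) = 0)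
    (hsymmV : ∀ u v : V, brV u v = brV v u)
    (hmultV : ∀ u v : V, β (brV u v) = brV (β u) (β v))
    (hjacV : ∀ u v w : V,
      brV (β u) (brV v w) + brV (β v) (brV w u) + brV (β w) (brV u v) = 0)
    (ρ : J →ₗ[K] V →ₗ[K] V) (θ : J →ₗ[K] J →ₗ[K] V)
    (hθsymm : ∀ x y : J, θ x y = θ y x)
    (hθcompat : ∀ x y : J, β (θ x y) = θ (α x) (α y))
    (brM : J × V → J × V → J × V)
    (hbrM : ∀ m n : J × V,
      brM m n = (br m.1 n.1, θ m.1 n.1 + ρ m.1 n.2 + ρ n.1 m.2 + brV m.2 n.2))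
    (αM : J × V → J × V) (hαM : ∀ m : J × V, αM m = (α m.1, β m.2)) :
    ((∀ m n : J × V, αM (brM m n) = brM (αM m) (αM n)) ∧
      (∀ m n p : J × V, brM (αM m) (brM n p) + brM (αM n) (brM p m)
        + brM (αM p) (brM m n) = 0)) ↔
    ((∀ (x : J) (v : V), ρ (α x) (β v) = β (ρ x v)) ∧
      (∀ (x y : J) (v : V),
        ρ (br x y) (β v) = - ρ (α x) (ρ y v) - ρ (α y) (ρ x v) - brV (θ x y) (β v)) ∧
      (∀ x y z : J,
        θ (α x) (br y z) + θ (α y) (br x z) + θ (α z) (br x y)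
          + ρ (α x) (θ y z) + ρ (α y) (θ x z) + ρ (α z) (θ x y) = 0) ∧
      (∀ (x : J) (u v : V),
        ρ (α x) (brV u v) = - brV (β u) (ρ x v) - brV (β v) (ρ x u))) := by

  constructor
  · rintro ⟨hm, hj⟩
    refine ⟨?_, ?_, ?_, ?_⟩
    · intro x v
      have h := hm (x, 0) (0, v)
      simp [hbrM, hαM, Prod.ext_iff] at h
      exact h.symm
    · intro x y v
      have h := hj (x, 0) (y, 0) (0, v)
      simp [hbrM, hαM, Prod.ext_iff, hsymm x y, hsymmV] at h
      rw [hsymm y x] at h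
      linear_combination (norm := module) h
    · intro x y z
      have h := hj (x, 0) (y, 0) (z, 0)
      simp [hbrM, hαM, Prod.ext_iff] at h
      rw [hsymm z x, hθsymm z x] at h
      linear_combination (norm := module) h.2
    · intro x u v
      have h := hj (x, 0) (0, u) (0, v)
      simp [hbrM, hαM, Prod.ext_iff] at h
      linear_combination (norm := module) h
  · rintro ⟨h1, h2, h3, h4⟩
    constructor
    · intro m n
      simp [hbrM, hαM, Prod.ext_iff, hmult, hmultV, hθcompat, h1]
    · intro m n p
      simp only [hbrM, hαM, Prod.ext_iff, map_add, LinearMap.add_apply, LinearMap.map_add,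
        Prod.fst_add, Prod.snd_add, Prod.mk_add_mk, Prod.mk_eq_zero, Prod.fst_zero, Prod.snd_zero]
      constructor
      · exact hjac m.1 n.1 p.1
      · rw [hsymm p.1 m.1, hθsymm p.1 m.1, hsymmV (β m.2) (θ n.1 p.1),
          hsymmV (β n.2) (θ m.1 p.1), hsymmV (β p.2) (θ m.1 n.1)]
        linear_combination (norm := module) h2 n.1 p.1 m.2 + h2 m.1 p.1 n.2 + h2 m.1 n.1 p.2
          + h4 m.1 n.2 p.2 + h4 n.1 p.2 m.2 + h4 p.1 m.2 n.2
          + h3 m.1 n.1 p.1 + hjacV m.2 n.2 p.2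
end

section
/- Let (J, [·,·], α) be a Hom-Jacobi-Jordan algebra, (V, β) with a representation ρ: J → End(V) satisfying ρ(α(x))∘β = β∘ρ(x) and ρ([x,y])∘β = −ρ(α(x))ρ(y) − ρ(α(y))ρ(x). Then d² ∘ d¹ = 0, where d¹(f)(x,y) = f([x,y]) − ρ(x)f(y) − ρ(y)f(x) for f: J → V linear with f∘α = β∘f, and d²(g)(x,y,z) = g(α(x),[y,z]) + g(α(y),[x,z]) + g(α(z),[x,y]) + ρ(α(x))g(y,z) + ρ(α(y))g(x,z) + ρ(α(z))g(x,y) for symmetric bilinear g: J×J → V with g∘(α⊗α) = β∘g. -/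
/-- `d² ∘ d¹ = 0` for the coboundary operators of a Hom-Jacobi-Jordan
algebra `(J, br, α)` with a representation `(V, β, ρ)`. -/
theorem d_two_comp_d_one_eq_zero
    {K : Type*} [Field K] {J : Type*} [AddCommGroup J] [Module K J]
    {V : Type*} [AddCommGroup V] [Module K V]
    (br : J →ₗ[K] J →ₗ[K] J) (α : J →ₗ[K] J)
    (hsymm : ∀ x y : J, br x y = br y x)
    (hmult : ∀ x y : J, α (br x y) = br (α x) (α y))
    (hjac : ∀ x y z : J, br (α x) (br y z) + br (α y) (br z x) + br (α z) (br x y) = 0)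
    (β : V →ₗ[K] V) (ρ : J →ₗ[K] V →ₗ[K] V)
    (hrep1 : ∀ (x : J) (v : V), ρ (α x) (β v) = β (ρ x v))
    (hrep2 : ∀ (x y : J) (v : V), ρ (br x y) (β v) = - ρ (α x) (ρ y v) - ρ (α y) (ρ x v))
    (f : J →ₗ[K] V) (hf : ∀ x : J, f (α x) = β (f x))
    (d1f : J → J → V) (hd1f : ∀ x y : J, d1f x y = f (br x y) - ρ x (f y) - ρ y (f x)) :
    ∀ x y z : J,
      d1f (α x) (br y z) + d1f (α y) (br x z) + d1f (α z) (br x y)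
        + ρ (α x) (d1f y z) + ρ (α y) (d1f x z) + ρ (α z) (d1f x y) = 0 := by
  intro x y z
  have h0 : f (br (α x) (br y z)) + f (br (α y) (br x z)) + f (br (α z) (br x y)) = 0 := by
    rw [hsymm x z, ← map_add, ← map_add, hjac, map_zero]
  simp only [hd1f, hf, hrep2, map_sub, map_neg]
  rw [← h0]
  abel
end

section
/- Let E: 0 → V →^i M →^π J → 0 be a diagonal split extension of Hom-Jacobi-Jordan algebras. Then there exists a 2-cocycle (ρ, θ) of J with values in V such that E is equivalent to the standard split extension 0 → V → J⊕V → J → 0 with bracket [x+u, y+v] = [x,y]_J + θ(x,y) + ρ(x)v + ρ(y)u + [u,v]_V and twist α⊕β. -/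
variable {K : Type*} [Field K]
variable {J : Type*} [AddCommGroup J] [Module K J]
variable {V : Type*} [AddCommGroup V] [Module K V]

/-- Every diagonal split extension of `J` by `V` is equivalent to a standard
split extension determined by some 2-cocycle `(ρ, θ)`. -/
theorem diagonal_split_extension_equiv_standard
    {M : Type*} [AddCommGroup M] [Module K M]
    (br : J →ₗ[K] J →ₗ[K] J) (α : J →ₗ[K] J)
    (brV : V →ₗ[K] V →ₗ[K] V) (β : V →ₗ[K] V)
    (brM : M →ₗ[K] M →ₗ[K] M) (αM : M →ₗ[K] M)
    (hsymm : ∀ x y : J, br x y = br y x)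
    (hmult : ∀ x y : J, α (br x y) = br (α x) (α y))
    (hjac : ∀ x y z : J, br (α x) (br y z) + br (α y) (br z x) + br (α z) (br x y) = 0)
    (hsymmV : ∀ u v : V, brV u v = brV v u)
    (hmultV : ∀ u v : V, β (brV u v) = brV (β u) (β v))
    (hjacV : ∀ u v w : V,
      brV (β u) (brV v w) + brV (β v) (brV w u) + brV (β w) (brV u v) = 0)
    (hsymmM : ∀ m n : M, brM m n = brM n m)
    (hmultM : ∀ m n : M, αM (brM m n) = brM (αM m) (αM n))
    (hjacM : ∀ m n p : M,
      brM (αM m) (brM n p) + brM (αM n) (brM p m) + brM (αM p) (brM m n) = 0)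
    (i : V →ₗ[K] M) (π : M →ₗ[K] J)
    (hi_tw : ∀ v : V, αM (i v) = i (β v))
    (hi_br : ∀ u v : V, i (brV u v) = brM (i u) (i v))
    (hπ_tw : ∀ m : M, α (π m) = π (αM m))
    (hπ_br : ∀ m n : M, π (brM m n) = br (π m) (π n))
    (hi_inj : Function.Injective i) (hπ_surj : Function.Surjective π)
    (hexact : LinearMap.range i = LinearMap.ker π)
    -- the extension is a diagonal split extension: there is a Hom-section with
    -- `M = i(V) ⊕ s(J)`
    (hdiag : ∃ s : J →ₗ[K] M, (∀ x : J, π (s x) = x) ∧ (∀ x : J, αM (s x) = s (α x)) ∧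
        IsCompl (LinearMap.range i) (LinearMap.range s)) :
    ∃ (ρ : J →ₗ[K] V →ₗ[K] V) (θ : J →ₗ[K] J →ₗ[K] V),
      IsTwoCocycle br α brV β ρ θ ∧
      ∃ Φ : (J × V) ≃ₗ[K] M,
        (∀ m : J × V, Φ (α m.1, β m.2) = αM (Φ m)) ∧
        (∀ m n : J × V,
          Φ (br m.1 n.1, θ m.1 n.1 + ρ m.1 n.2 + ρ n.1 m.2 + brV m.2 n.2)
            = brM (Φ m) (Φ n)) ∧
        (∀ v : V, Φ (0, v) = i v) ∧
        (∀ m : J × V, π (Φ m) = m.1) := by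
  classical
  obtain ⟨s, hs1, hs2, hcompl⟩ := hdiag
  have hπi : ∀ v, π (i v) = 0 := fun v => by
    have : i v ∈ LinearMap.ker π := hexact ▸ LinearMap.mem_range_self i v
    exact this
  set e : V ≃ₗ[K] LinearMap.range i := LinearEquiv.ofInjective i hi_inj with he
  set p : M →ₗ[K] LinearMap.range i :=
    (LinearMap.range i).linearProjOfIsCompl (LinearMap.range s) hcompl with hp
  set q : M →ₗ[K] LinearMap.range s :=
    (LinearMap.range s).linearProjOfIsCompl (LinearMap.range i) hcompl.symm with hq
  set j : M →ₗ[K] V := e.symm.toLinearMap ∘ₗ p with hjdef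
  have hie : ∀ w : LinearMap.range i, i (e.symm w) = (w : M) := fun w =>
    LinearEquiv.ofInjective_symm_apply (f := i) (h := hi_inj) w
  have hji : ∀ v, j (i v) = v := fun v => by
    have h1 : p (i v) = e v := by
      have h2 := Submodule.linearProjOfIsCompl_apply_left hcompl
        ⟨i v, LinearMap.mem_range_self i v⟩
      apply Subtype.ext
      exact (congrArg Subtype.val h2).trans (LinearEquiv.ofInjective_apply i v).symm
    simp [hjdef, h1]
  have hjs : ∀ x, j (s x) = 0 := fun x => by
    have h1 : p (s x) = 0 :=
      Submodule.projectionOnto_apply_of_mem_right hcompl (LinearMap.mem_range_self s x)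
    simp [hjdef, h1]
  have hdec : ∀ m : M, i (j m) + s (π m) = m := fun m => by
    have h1 : (p m : M) + (q m : M) = m := Submodule.projection_add_projection_eq_self hcompl m
    have h2 : i (j m) = (p m : M) := hie (p m)
    have h3 : s (π m) = (q m : M) := by
      obtain ⟨y, hy⟩ := (q m).2
      have h4 : π m = y := by
        have h6 := congrArg π h1
        rw [map_add] at h6
        have h5 : π ((p m : M)) = 0 := by
          have : (p m : M) ∈ LinearMap.ker π := hexact ▸ (p m).2
          exact this
        rw [h5, zero_add, ← hy, hs1] at h6
        exact h6.symm
      rw [h4, hy]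
    rw [h2, h3]
    exact h1
  have hij0 : ∀ m : M, π m = 0 → i (j m) = m := fun m hm => by
    have := hdec m
    rwa [hm, map_zero, add_zero] at this
  -- define ρ and θ
  set ρ : J →ₗ[K] V →ₗ[K] V := (((brM.comp s).compl₂ i).compr₂ j) with hρ
  set T : J →ₗ[K] J →ₗ[K] M := (brM.comp s).compl₂ s - br.compr₂ s with hT
  set θ : J →ₗ[K] J →ₗ[K] V := T.compr₂ j with hθ
  have hρ_apply : ∀ (x : J) (v : V), ρ x v = j (brM (s x) (i v)) := fun x v => rfl
  have hθ_apply : ∀ x y : J, θ x y = j (brM (s x) (s y) - s (br x y)) := fun x y => by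
    simp [hθ, hT, LinearMap.compr₂_apply, LinearMap.sub_apply, LinearMap.compl₂_apply,
      LinearMap.comp_apply]
  have hiρ : ∀ (x : J) (v : V), i (ρ x v) = brM (s x) (i v) := fun x v => by
    rw [hρ_apply]
    exact hij0 _ (by rw [hπ_br, hs1, hπi, (br x).map_zero])
  have hiθ : ∀ x y : J, i (θ x y) = brM (s x) (s y) - s (br x y) := fun x y => by
    rw [hθ_apply]
    exact hij0 _ (by rw [map_sub, hπ_br, hs1, hs1, hs1, sub_self])
  -- the 2-cocycle conditions
  have c1 : ∀ x y : J, θ x y = θ y x := fun x y => by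
    rw [hθ_apply, hθ_apply, hsymmM (s x) (s y), hsymm x y]
  have c2 : ∀ x y : J, β (θ x y) = θ (α x) (α y) := fun x y => by
    apply hi_inj
    rw [← hi_tw, hiθ, hiθ, map_sub, hmultM, hs2, hs2, hs2, hmult]
  have c3 : ∀ (x : J) (v : V), ρ (α x) (β v) = β (ρ x v) := fun x v => by
    apply hi_inj
    rw [← hi_tw, hiρ, hiρ, hmultM, hs2, hi_tw]
  have c4 : ∀ (x y : J) (v : V),
      ρ (br x y) (β v) = - ρ (α x) (ρ y v) - ρ (α y) (ρ x v) - brV (θ x y) (β v) := by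
    intro x y v
    apply hi_inj
    have hJ := hjacM (s x) (s y) (i v)
    rw [hs2, hs2, hi_tw, hsymmM (i v) (s x),
      hsymmM (i (β v)) (brM (s x) (s y))] at hJ
    simp only [map_sub, map_neg, hiρ, hi_br, hiθ, LinearMap.sub_apply]
    linear_combination (norm := abel) hJ
  have c5 : ∀ x y z : J,
      θ (α x) (br y z) + θ (α y) (br x z) + θ (α z) (br x y)
        + ρ (α x) (θ y z) + ρ (α y) (θ x z) + ρ (α z) (θ x y) = 0 := by
    intro x y z
    apply hi_inj
    have hJ := hjacM (s x) (s y) (s z)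
    rw [hs2, hs2, hs2] at hJ
    have hsJ : s (br (α x) (br y z)) + s (br (α y) (br z x)) + s (br (α z) (br x y)) = 0 := by
      rw [← map_add, ← map_add, hjac, map_zero]
    simp only [map_add, map_zero, hsymm x z, hsymmM (s x) (s z), hiθ, hiρ, map_sub, LinearMap.sub_apply]
    linear_combination (norm := abel) hJ - hsJ
  have c6 : ∀ (x : J) (u v : V),
      ρ (α x) (brV u v) = - brV (β u) (ρ x v) - brV (β v) (ρ x u) := by
    intro x u v
    apply hi_inj
    have hJ := hjacM (s x) (i u) (i v)
    rw [hs2, hi_tw, hi_tw, hsymmM (i v) (s x)] at hJ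
    simp only [map_sub, map_neg, hiρ, hi_br]
    linear_combination (norm := abel) hJ
  refine ⟨ρ, θ, ⟨c1, c2, c3, c4, c5, c6⟩, ?_⟩
  -- the equivalence
  set f : (J × V) →ₗ[K] M :=
    s ∘ₗ LinearMap.fst K J V + i ∘ₗ LinearMap.snd K J V with hf
  set g : M →ₗ[K] (J × V) := π.prod j with hg
  have hf_apply : ∀ m : J × V, f m = s m.1 + i m.2 := fun m => rfl
  have hfg : f.comp g = LinearMap.id := by
    apply LinearMap.ext
    intro m
    simp only [LinearMap.comp_apply, LinearMap.id_apply, hf, hg, LinearMap.add_apply,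
      LinearMap.prod_apply, Pi.prod, LinearMap.fst_apply, LinearMap.snd_apply]
    rw [add_comm]
    exact hdec m
  have hgf : g.comp f = LinearMap.id := by
    apply LinearMap.ext
    intro m
    simp only [LinearMap.comp_apply, LinearMap.id_apply, hf, hg, LinearMap.add_apply,
      LinearMap.prod_apply, Function.prod, LinearMap.fst_apply, LinearMap.snd_apply,
      map_add, hs1, hπi, hji, hjs]
    simp
  refine ⟨LinearEquiv.ofLinear f g hfg hgf, ?_, ?_, ?_, ?_⟩
  · intro m
    show f (α m.1, β m.2) = αM (f m)
    rw [hf_apply, hf_apply]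
    simp only [map_add, hs2, hi_tw]
  · intro m n
    show f _ = brM (f m) (f n)
    rw [hf_apply, hf_apply, hf_apply]
    have hbil : brM (s m.1 + i m.2) (s n.1 + i n.2)
        = brM (s m.1) (s n.1) + brM (s m.1) (i n.2) + brM (i m.2) (s n.1)
          + brM (i m.2) (i n.2) := by
      simp only [map_add, LinearMap.add_apply]
      abel
    rw [hbil]
    have h1 : i (θ m.1 n.1) = brM (s m.1) (s n.1) - s (br m.1 n.1) := hiθ _ _
    rw [map_add, map_add, map_add, hi_br, hiρ, hiρ, h1, hsymmM (s n.1) (i m.2)]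
    abel
  · intro v
    show f (0, v) = i v
    rw [hf_apply]
    simp
  · intro m
    show π (f m) = m.1
    rw [hf_apply, map_add, hs1, hπi, add_zero]
end

section
/- Let J be a 1-dimensional Hom-Jacobi-Jordan algebra with basis u₁, zero bracket, and α(u₁) = b u₁, and V a 1-dimensional Hom-Jacobi-Jordan algebra with basis v₁, zero bracket, and β(v₁) = a v₁, over ℂ with a,b ≠ 0. Then every 2-cocycle (ρ,θ) of J with values in V is equivalent (via a 1-cochain h ∈ C¹_{α,β}(J,V)) to one with ρ(u₁) = 0 and θ(u₁,u₁) = x v₁ for some x ∈ ℂ; moreover θ can be nonzero only when a = b². -/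
variable {K : Type*} [Field K]
variable {J : Type*} [AddCommGroup J] [Module K J]
variable {V : Type*} [AddCommGroup V] [Module K V]

/-- Any 2-cocycle of a 1-dimensional Hom-Jacobi-Jordan algebra
`J = ⟨u₁⟩` (zero bracket, `α u₁ = b u₁`) with values in a 1-dimensional Hom-Jacobi-Jordan
algebra `V = ⟨v₁⟩` (zero bracket, `β v₁ = a v₁`) is equivalent, via a 1-cochain `h`, to a
cocycle with `ρ(u₁) = 0` and `θ(u₁,u₁) = x v₁` for some `x ∈ ℂ`; moreover `θ` can be
nonzero only when `a = b²`. -/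
theorem one_dim_cocycles_classification
    {J : Type*} [AddCommGroup J] [Module ℂ J]
    {V : Type*} [AddCommGroup V] [Module ℂ V]
    (u : Module.Basis (Fin 1) ℂ J) (vb : Module.Basis (Fin 1) ℂ V) (a b : ℂ) (ha : a ≠ 0) (hb : b ≠ 0)
    (br : J →ₗ[ℂ] J →ₗ[ℂ] J) (α : J →ₗ[ℂ] J)
    (brV : V →ₗ[ℂ] V →ₗ[ℂ] V) (β : V →ₗ[ℂ] V)
    (hbr : ∀ x y : J, br x y = 0) (hbrV : ∀ s t : V, brV s t = 0)
    (hα : α (u 0) = b • u 0) (hβ : β (vb 0) = a • vb 0)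
    (ρ : J →ₗ[ℂ] V →ₗ[ℂ] V) (θ : J →ₗ[ℂ] J →ₗ[ℂ] V)
    (hc : IsTwoCocycle br α brV β ρ θ) :
    (∃ (x : ℂ) (h : J →ₗ[ℂ] V), (∀ y : J, h (α y) = β (h y)) ∧
      (∀ t : V, ρ (u 0) t + brV (h (u 0)) t = 0) ∧
      (θ (u 0) (u 0) + h (br (u 0) (u 0)) - ρ (u 0) (h (u 0)) - ρ (u 0) (h (u 0))
          + brV (h (u 0)) (h (u 0)) = x • vb 0)) ∧
    (θ (u 0) (u 0) ≠ 0 → a = b ^ 2) := by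
  -- every element of V is a multiple of vb 0
  have hV : ∀ w : V, w = (vb.repr w 0) • vb 0 := by
    intro w
    conv_lhs => rw [← vb.sum_repr w]
    simp [Fin.sum_univ_one]
  obtain ⟨hθsymm, hθβ, hρβ, hcond4, hcond5, hcond6⟩ := hc
  set c : ℂ := vb.repr (ρ (u 0) (vb 0)) 0 with hc_def
  have hρvb : ρ (u 0) (vb 0) = c • vb 0 := hV _
  -- from condition 4: c = 0
  have key := hcond4 (u 0) (u 0) (vb 0)
  rw [hbr, hbrV] at key
  simp only [map_zero, LinearMap.zero_apply, hα, hρvb, map_smul] at key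
  simp only [LinearMap.smul_apply, hρvb] at key
  have hkey : (0 : V) = (-(b * (c * c)) - b * (c * c)) • vb 0 := by
    rw [key]; module
  have hc2 : -(b * (c * c)) - b * (c * c) = 0 := by
    by_contra hne
    have := hV (vb 0)
    exact hne ((smul_eq_zero.mp hkey.symm).resolve_right
      (vb.ne_zero 0))
  have hc0 : c = 0 := by
    have : b * (c * c) = 0 := by linear_combination -hc2 / 2
    rcases mul_eq_zero.mp this with h' | h'
    · exact absurd h' hb
    · exact pow_eq_zero_iff (n := 2) two_ne_zero |>.mp (by rw [sq]; exact h')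
  have hρ0 : ∀ t : V, ρ (u 0) t = 0 := by
    intro t
    have := hV t
    rw [this, map_smul, hρvb, hc0, zero_smul, smul_zero]
  constructor
  · refine ⟨vb.repr (θ (u 0) (u 0)) 0, 0, ?_, ?_, ?_⟩
    · intro y; simp
    · intro t; simp [hρ0, hbrV]
    · simp only [LinearMap.zero_apply, map_zero, hρ0, hbrV]
      rw [← hV]
      abel
  · intro hne
    have h2 := hθβ (u 0) (u 0)
    rw [hα] at h2
    have hθv : θ (u 0) (u 0) = (vb.repr (θ (u 0) (u 0)) 0) • vb 0 := hV _
    have hβθ : β (θ (u 0) (u 0)) = a • θ (u 0) (u 0) := by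
      rw [hθv, map_smul, hβ]; module
    rw [hβθ] at h2
    simp only [map_smul, LinearMap.smul_apply] at h2
    have : (a - b ^ 2) • θ (u 0) (u 0) = 0 := by
      rw [sub_smul, h2]; rw [sq]; module
    rcases smul_eq_zero.mp this with h' | h'
    · exact sub_eq_zero.mp h'
    · exact absurd h' hne
end
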